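/- Assume the reference interface data p_{0,2} < κ < p_{0,1}, u_{0,2} < u_{0,1} with (p_{0,1} − p_{0,2})(𝒯^i(p_{0,2}) − 1) = (u_{0,1} − u_{0,2})², and the ε-approximate reference data (p_{0,1}^ε, u_{0,1}^ε) = (p_{0,1}, u_{0,1}), (p_{0,2}^ε, u_{0,2}^ε) with p_{0,2}^ε < κ, p_{0,2}^ε → p_{0,2}, u_{0,2}^ε = u_{0,1} − √((𝒯_ε(p_{0,2}^ε) − 𝒯_ε(p_{0,1}))(p_{0,1} − p_{0,2}^ε)). Then there exist δ > 0, ε̄ > 0 and C > 0 such that for every 0 < ε < ε̄ and every pair of states U^ℓ = (p^ℓ, u^ℓ) with |p^ℓ − p_{0,1}^ε| < δ, |u^ℓ − u_{0,1}^ε| < δ and U^r = (p^r, u^r) with |p^r − p_{0,2}^ε| < δ, |u^r − u_{0,2}^ε| < δ, there exists a unique pair of wave strengths (σ₁, σ₂) with |σ₁| ≤ Cδ and σ₂ < 0 such that U^r = Φ₂^ε(σ₂)(Φ₁^ε(σ₁)(U^ℓ)) and the intermediate state Φ₁^ε(σ₁)(U^ℓ) has pressure greater than κ (i.e. the Riemann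 problem across the congested/free interface is uniquely solved by a 1-wave in the congested region followed by a 2-shock interface). -/

import Mathlib

/-!
For fixed `ε`, the 2-shock joining the intermediate state `Φ₁(σ₁)Uˡ` to `Uʳ` forces
`σ₂ = pʳ - (pˡ + σ₁)`, which leaves one scalar equation `h(σ₁) = uʳ` with
`h(σ) = u(Φ₁(σ)Uˡ) - √((𝒯(pʳ) - 𝒯(pˡ + σ)) (pˡ + σ - pʳ))`.
The velocity along the 1-wave curve does not increase with `σ`. The shock term grows at a rate
bounded below, because `𝒯` has a gap `m > 0` between free pressures (below `κ`) and congested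
ones (at least `κ`). So `h` decreases at a definite rate, and since `|h(0) - uʳ| = O(δ)`, the
intermediate value theorem gives a unique root with `|σ₁| ≤ Cδ`. The constants are uniform for
small `ε`. The gap comes from `𝒫_ε(τ) ≥ κ τ^(-γᵢ)` and `𝒫_ε(τ) → κ τ^(-γᵢ)` as `ε → 0`. The
Lipschitz bound on `𝒯_ε` comes from `|𝒫_ε'| ≥ κ γᵢ B^(-γᵢ-1)` on `(1, B]`.
-/

open Set Filter MeasureTheory Topology

/-- The singular pressure law `𝒫_ε(τ) = κ τ^{-γᵢ} + ε (τ-1)^{-γ_c}`. -/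
noncomputable def Pe (κ γi γc ε τ : ℝ) : ℝ := κ * τ ^ (-γi) + ε * (τ - 1) ^ (-γc)

/-- Forward wave map of the first family (1-shock for `σ ≥ 0`, 1-rarefaction for `σ < 0`)
for the p-system with specific-volume law `Tf`, in the variables `(p,u)`. -/
noncomputable def Phi1 (Tf : ℝ → ℝ) (σ : ℝ) (U : ℝ × ℝ) : ℝ × ℝ :=
  if 0 ≤ σ then (U.1 + σ, U.2 - Real.sqrt ((Tf U.1 - Tf (U.1 + σ)) * σ))
  else (U.1 + σ, U.2 - ∫ ξ in U.1..(U.1 + σ), Real.sqrt (-deriv Tf ξ))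

/-- Forward wave map of the second family (2-shock for `σ < 0`, 2-rarefaction for `σ > 0`)
for the p-system with specific-volume law `Tf`, in the variables `(p,u)`. -/
noncomputable def Phi2 (Tf : ℝ → ℝ) (σ : ℝ) (U : ℝ × ℝ) : ℝ × ℝ :=
  if σ < 0 then (U.1 + σ, U.2 - Real.sqrt ((Tf (U.1 + σ) - Tf U.1) * (-σ)))
  else (U.1 + σ, U.2 + ∫ ξ in U.1..(U.1 + σ), Real.sqrt (-deriv Tf ξ))

open scoped NNReal

lemma abs_sqrt_sub_sqrt_le {g x y : ℝ} (hg : 0 < g) (hx : g ≤ x) (hy : g ≤ y) :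
    |√x - √y| ≤ |x - y| / (2 * √g) := by
  have hgx : √g ≤ √x := Real.sqrt_le_sqrt hx
  have hgy : √g ≤ √y := Real.sqrt_le_sqrt hy
  have hsum : |x - y| = |√x - √y| * (√x + √y) := by
    rw [← abs_of_nonneg (by positivity : 0 ≤ √x + √y), ← abs_mul]
    congr 1
    nlinarith [Real.sq_sqrt (hg.le.trans hx), Real.sq_sqrt (hg.le.trans hy)]
  rw [le_div_iff₀ (by positivity), hsum]
  exact mul_le_mul_of_nonneg_left (by linarith) (abs_nonneg _)

lemma sub_div_le_sqrt_sub_sqrt {x y M : ℝ} (hx : 0 ≤ x) (hxy : x ≤ y) (hyM : y ≤ M) :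
    (y - x) / (2 * √M) ≤ √y - √x := by
  rcases hxy.eq_or_lt with rfl | hlt
  · simp
  have hy : 0 < √y := Real.sqrt_pos.2 (hx.trans_lt hlt)
  have hyM' : √y ≤ √M := Real.sqrt_le_sqrt hyM
  have hxy' : √x ≤ √y := Real.sqrt_le_sqrt hxy
  rw [div_le_iff₀ (by linarith)]
  nlinarith [Real.sq_sqrt hx, Real.sq_sqrt (hx.trans hxy), Real.sqrt_nonneg x,
    mul_nonneg (sub_nonneg.2 hxy') (by linarith : 0 ≤ 2 * √M - √y - √x)]

lemma existsUnique_mem_Icc_eq {h : ℝ → ℝ} {c R v : ℝ} (hc : 0 < c)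
    (hcont : ContinuousOn h (Icc (-R) R))
    (hrate : ∀ x ∈ Icc (-R) R, ∀ y ∈ Icc (-R) R, x ≤ y → c * (y - x) ≤ h x - h y)
    (hv : |h 0 - v| ≤ c * R) :
    ∃! x, x ∈ Icc (-R) R ∧ h x = v := by
  have hR : 0 ≤ R := nonneg_of_mul_nonneg_right ((abs_nonneg _).trans hv) hc
  have h0 : (0 : ℝ) ∈ Icc (-R) R := ⟨by linarith, hR⟩
  have hanti : StrictAntiOn h (Icc (-R) R) := fun x hx y hy hxy => by
    nlinarith [hrate x hx y hy hxy.le, mul_pos hc (sub_pos.2 hxy)]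
  have hmem : v ∈ Icc (h R) (h (-R)) := by
    have := hrate 0 h0 R ⟨by linarith, le_rfl⟩ hR
    have := hrate (-R) ⟨le_rfl, by linarith⟩ 0 h0 (by linarith)
    constructor <;> linarith [abs_le.1 hv]
  obtain ⟨x, hx, hxv⟩ := intermediate_value_Icc' (by linarith) hcont hmem
  exact ⟨x, ⟨hx, hxv⟩, fun y ⟨hy, hyv⟩ => hanti.injOn hy hx (hyv.trans hxv.symm)⟩

section InverseFunction

variable {P T : ℝ → ℝ}

lemma le_iff_of_inverse (hP : StrictAntiOn P (Ioi 1)) (hT : ∀ p > 0, 1 < T p ∧ P (T p) = p)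
    {p τ : ℝ} (hp : 0 < p) (hτ : 1 < τ) : T p ≤ τ ↔ P τ ≤ p := by
  conv_rhs => rw [← (hT p hp).2]
  exact (hP.le_iff_ge hτ (hT p hp).1).symm

lemma strictAntiOn_of_inverse (hP : StrictAntiOn P (Ioi 1))
    (hT : ∀ p > 0, 1 < T p ∧ P (T p) = p) : StrictAntiOn T (Ioi 0) := by
  intro p hp q hq hpq
  rwa [← hP.lt_iff_gt (hT p hp).1 (hT q hq).1, (hT p hp).2, (hT q hq).2]

lemma apply_apply_of_inverse (hP : StrictAntiOn P (Ioi 1)) (hPpos : MapsTo P (Ioi 1) (Ioi 0))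
    (hT : ∀ p > 0, 1 < T p ∧ P (T p) = p) {τ : ℝ} (hτ : 1 < τ) : T (P τ) = τ :=
  hP.injOn (hT _ (hPpos hτ)).1 hτ (hT _ (hPpos hτ)).2

lemma continuousOn_of_inverse (hP : StrictAntiOn P (Ioi 1)) (hPpos : MapsTo P (Ioi 1) (Ioi 0))
    (hT : ∀ p > 0, 1 < T p ∧ P (T p) = p) : ContinuousOn T (Ioi 0) := by
  intro p hp
  have hmono : MonotoneOn (fun x => -T x) (Ioi 0) :=
    fun x hx y hy hxy => neg_le_neg ((strictAntiOn_of_inverse hP hT).antitoneOn hx hy hxy)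
  -- `-T` is monotone and its image contains the neighbourhood `Iio (-1)` of `-T p`: no jumps
  have himage : Iio (-1) ⊆ (fun x => -T x) '' Ioi 0 := by
    intro y hy
    have hy' : 1 < -y := by rw [mem_Iio] at hy; linarith
    exact ⟨P (-y), hPpos hy', by simp [apply_apply_of_inverse hP hPpos hT hy']⟩
  have hcont := continuousAt_of_monotoneOn_of_image_mem_nhds hmono (Ioi_mem_nhds hp)
    (mem_of_superset (Iio_mem_nhds (by simpa using (hT p hp).1)) himage)
  have : ContinuousAt T p := by simpa [Pi.neg_def] using hcont.neg
  exact this.continuousWithinAt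

lemma lipschitzOnWith_of_inverse {a B c : ℝ}
    (hP : ∀ τ τ', 1 < τ' → τ' ≤ τ → τ ≤ B → c * (τ - τ') ≤ P τ' - P τ) (hc : 0 < c)
    (hT : ∀ p > 0, 1 < T p ∧ P (T p) = p) (hTa : AntitoneOn T (Ioi 0)) (ha : 0 < a)
    (hTB : T a ≤ B) : LipschitzOnWith (Real.toNNReal c⁻¹) T (Ici a) := by
  refine LipschitzOnWith.of_le_add_mul' _ fun x hx y hy => ?_
  have hx0 : 0 < x := ha.trans_le hx
  have hy0 : 0 < y := ha.trans_le hy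
  rcases le_total x y with hxy | hyx
  · have hP' := hP (T x) (T y) (hT y hy0).1 (hTa hx0 hy0 hxy) ((hTa ha hx0 hx).trans hTB)
    rw [(hT x hx0).2, (hT y hy0).2] at hP'
    rw [Real.dist_eq, abs_of_nonpos (by linarith), ← div_eq_inv_mul, ← sub_le_iff_le_add',
      le_div_iff₀ hc]
    linarith
  · have := hTa hy0 hx0 hyx
    nlinarith [dist_nonneg (x := x) (y := y), inv_pos.2 hc]

end InverseFunction

section PressureLaw

variable {κ γi γc ε : ℝ}

lemma Pe_pos (hκ : 0 < κ) (hε : 0 ≤ ε) {τ : ℝ} (hτ : 1 < τ) : 0 < Pe κ γi γc ε τ := by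
  have : 0 < τ ^ (-γi) := Real.rpow_pos_of_pos (by linarith) _
  have : 0 ≤ (τ - 1) ^ (-γc) := Real.rpow_nonneg (by linarith) _
  unfold Pe
  positivity

lemma Pe_strictAntiOn (hκ : 0 < κ) (hγi : 0 < γi) (hγc : 0 ≤ γc) (hε : 0 ≤ ε) :
    StrictAntiOn (Pe κ γi γc ε) (Ioi 1) := by
  intro x (hx : 1 < x) y (hy : 1 < y) hxy
  have h1 : y ^ (-γi) < x ^ (-γi) := Real.rpow_lt_rpow_of_neg (by linarith) hxy (by linarith)
  have h2 : (y - 1) ^ (-γc) ≤ (x - 1) ^ (-γc) :=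
    Real.rpow_le_rpow_of_nonpos (by linarith) (by linarith) (by linarith)
  unfold Pe
  nlinarith [mul_le_mul_of_nonneg_left h2 hε]

lemma mul_sub_le_Pe_sub (hκ : 0 ≤ κ) (hγi : 0 ≤ γi) (hγc : 0 ≤ γc) (hε : 0 ≤ ε)
    {B τ τ' : ℝ} (hτ' : 1 < τ') (hτ'τ : τ' ≤ τ) (hτB : τ ≤ B) :
    κ * γi * B ^ (-γi - 1) * (τ - τ') ≤ Pe κ γi γc ε τ' - Pe κ γi γc ε τ := by
  have hpos : ∀ x ∈ Icc τ' τ, 0 < x := fun x hx => by linarith [hx.1]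
  have hmvt : τ ^ (-γi) - τ' ^ (-γi) ≤ -γi * B ^ (-γi - 1) * (τ - τ') := by
    refine (convex_Icc τ' τ).image_sub_le_mul_sub_of_deriv_le
      (fun x hx => (Real.continuousAt_rpow_const _ _ (Or.inl (hpos x hx).ne')).continuousWithinAt)
      (fun x hx => (Real.differentiableAt_rpow_const_of_ne _
        (hpos x (interior_subset hx)).ne').differentiableWithinAt) (fun x hx => ?_)
      τ' (left_mem_Icc.2 hτ'τ) τ (right_mem_Icc.2 hτ'τ) hτ'τ
    rw [interior_Icc] at hx
    rw [Real.deriv_rpow_const]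
    have : B ^ (-γi - 1) ≤ x ^ (-γi - 1) :=
      Real.rpow_le_rpow_of_nonpos (by linarith [hx.1]) (by linarith [hx.2]) (by linarith)
    nlinarith
  have h2 : (τ - 1) ^ (-γc) ≤ (τ' - 1) ^ (-γc) :=
    Real.rpow_le_rpow_of_nonpos (by linarith) (by linarith) (by linarith)
  unfold Pe
  nlinarith [mul_le_mul_of_nonneg_left h2 hε, mul_le_mul_of_nonneg_left hmvt hκ]

end PressureLaw

section UniformBounds

variable {κ γi γc : ℝ}

lemma exists_lipschitzOnWith_of_Pe_inverse (hκ : 0 < κ) (hγi : 0 < γi) (hγc : 0 < γc)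
    {a : ℝ} (ha : 0 < a) :
    ∃ L : ℝ≥0, 0 < L ∧ ∀ ε, 0 < ε → ε ≤ 1 → ∀ T : ℝ → ℝ,
      (∀ p > 0, 1 < T p ∧ Pe κ γi γc ε (T p) = p) → LipschitzOnWith L T (Ici a) := by
  obtain ⟨B, hBa, hB⟩ : ∃ B, κ * B ^ (-γi) + (B - 1) ^ (-γc) ≤ a ∧ 1 < B := by
    have hlim : Tendsto (fun τ : ℝ => κ * τ ^ (-γi) + (τ - 1) ^ (-γc)) atTop (𝓝 0) := by
      simpa [sub_eq_add_neg] using ((tendsto_rpow_neg_atTop hγi).const_mul κ).add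
        ((tendsto_rpow_neg_atTop hγc).comp (tendsto_atTop_add_const_right _ (-1) tendsto_id))
    exact ((hlim.eventually (ge_mem_nhds ha)).and (eventually_gt_atTop 1)).exists
  have hc : 0 < κ * γi * B ^ (-γi - 1) := by
    have := Real.rpow_pos_of_pos (zero_lt_one.trans hB) (-γi - 1)
    positivity
  refine ⟨Real.toNNReal (κ * γi * B ^ (-γi - 1))⁻¹, Real.toNNReal_pos.2 (inv_pos.2 hc), ?_⟩
  intro ε hε hε1 T hT
  have hP := Pe_strictAntiOn (γc := γc) hκ hγi hγc.le hε.le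
  have hTB : T a ≤ B := by
    rw [le_iff_of_inverse hP hT ha hB]
    have : ε * (B - 1) ^ (-γc) ≤ (B - 1) ^ (-γc) :=
      mul_le_of_le_one_left (Real.rpow_nonneg (by linarith) _) hε1
    unfold Pe
    linarith
  exact lipschitzOnWith_of_inverse
    (fun τ τ' hτ' hτ'τ hτB => mul_sub_le_Pe_sub hκ.le hγi.le hγc.le hε.le hτ' hτ'τ hτB) hc hT
    (strictAntiOn_of_inverse hP hT).antitoneOn ha hTB

lemma exists_le_sub_of_Pe_inverse (hκ : 0 < κ) (hγi : 0 < γi) (hγc : 0 ≤ γc) {b : ℝ}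
    (hb : 0 < b) (hbκ : b < κ) :
    ∃ m > 0, ∀ᶠ ε in 𝓝[>] 0, ∀ T : ℝ → ℝ,
      (∀ p > 0, 1 < T p ∧ Pe κ γi γc ε (T p) = p) → m ≤ T b - T κ := by
  obtain ⟨θ, hθb, hθ⟩ : ∃ θ, b < κ * θ ^ (-γi) ∧ 1 < θ := by
    have hcont : ContinuousAt (fun τ : ℝ => κ * τ ^ (-γi)) 1 :=
      (Real.continuousAt_rpow_const _ _ (Or.inl one_ne_zero)).const_mul κ
    have hev := hcont.eventually (lt_mem_nhds (by simpa using hbκ))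
    exact ((hev.filter_mono nhdsWithin_le_nhds).and (self_mem_nhdsWithin (s := Ioi 1))).exists
  obtain ⟨τ₁, hτ₁, hτ₁θ⟩ := exists_between hθ
  have hκτ₁ : κ * τ₁ ^ (-γi) < κ := by
    have := Real.rpow_lt_one_of_one_lt_of_neg hτ₁ (neg_lt_zero.2 hγi)
    nlinarith
  have hlim : Tendsto (fun ε => Pe κ γi γc ε τ₁) (𝓝 0) (𝓝 (κ * τ₁ ^ (-γi))) := by
    have : Continuous (fun ε => Pe κ γi γc ε τ₁) := by unfold Pe; fun_prop
    simpa [Pe] using this.tendsto 0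
  refine ⟨θ - τ₁, sub_pos.2 hτ₁θ, ?_⟩
  filter_upwards [self_mem_nhdsWithin,
    nhdsWithin_le_nhds (hlim.eventually (gt_mem_nhds hκτ₁))] with ε (hε : 0 < ε) hPe T hT
  have hP := Pe_strictAntiOn (γc := γc) hκ hγi hγc hε.le
  have hTκ : T κ ≤ τ₁ := (le_iff_of_inverse hP hT hκ hτ₁).2 hPe.le
  have hTb : θ < T b := by
    rw [← not_le, le_iff_of_inverse hP hT hb hθ, not_le]
    have : 0 ≤ ε * (θ - 1) ^ (-γc) := mul_nonneg hε.le (Real.rpow_nonneg (by linarith) _)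
    unfold Pe
    linarith
  linarith

end UniformBounds

@[simp] lemma Phi1_fst (T : ℝ → ℝ) (σ : ℝ) (U : ℝ × ℝ) : (Phi1 T σ U).1 = U.1 + σ := by
  unfold Phi1; split_ifs <;> rfl

@[simp] lemma Phi2_fst (T : ℝ → ℝ) (σ : ℝ) (U : ℝ × ℝ) : (Phi2 T σ U).1 = U.1 + σ := by
  unfold Phi2; split_ifs <;> rfl

-- Both branches in one expression, which makes continuity and monotonicity in `σ` routine.
lemma Phi1_snd_eq (T : ℝ → ℝ) (σ : ℝ) (U : ℝ × ℝ) :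
    (Phi1 T σ U).2 = U.2 - √((T U.1 - T (U.1 + max σ 0)) * max σ 0)
      - ∫ ξ in U.1..U.1 + min σ 0, √(-deriv T ξ) := by
  rcases le_or_gt 0 σ with hσ | hσ
  · simp [Phi1, hσ]
  · simp [Phi1, not_le.2 hσ, hσ.le]

section WaveCurves

variable {T : ℝ → ℝ}

lemma intervalIntegrable_sqrt_neg_deriv {x y : ℝ} (hT : AntitoneOn T (uIcc x y)) :
    IntervalIntegrable (fun ξ => √(-deriv T ξ)) volume x y := by
  have hderiv : IntervalIntegrable (deriv T) volume x y := by
    simpa [Pi.neg_def] using (hT.neg.intervalIntegrable_deriv).neg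
  refine ((intervalIntegrable_const (c := (1 : ℝ))).add hderiv.abs).mono_fun
    (measurable_deriv T).neg.sqrt.aestronglyMeasurable (Eventually.of_forall fun ξ => ?_)
  dsimp only
  rw [Real.norm_of_nonneg (Real.sqrt_nonneg _), Real.norm_of_nonneg (by positivity)]
  refine Real.sqrt_le_iff.2 ⟨by positivity, ?_⟩
  nlinarith [neg_le_abs (deriv T ξ), abs_nonneg (deriv T ξ)]

lemma antitoneOn_Phi1_snd (hT : AntitoneOn T (Ioi 0)) {U : ℝ × ℝ} (hU : 0 < U.1) :
    AntitoneOn (fun σ => (Phi1 T σ U).2) (Ioi (-U.1)) := by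
  intro σ (hσ : -U.1 < σ) σ' _ hσσ'
  simp only [Phi1_snd_eq]
  have hmax : max σ 0 ≤ max σ' 0 := max_le_max hσσ' le_rfl
  have hpos : ∀ s, U.1 + max s 0 ∈ Ioi 0 := fun s => by
    rw [mem_Ioi]; linarith [le_max_right s 0]
  have hshock : (T U.1 - T (U.1 + max σ 0)) * max σ 0
      ≤ (T U.1 - T (U.1 + max σ' 0)) * max σ' 0 := by
    have h1 := hT (hpos σ) (hpos σ') (by linarith)
    have h2 := hT hU (hpos σ) (by linarith [le_max_right σ 0])
    exact mul_le_mul (by linarith) hmax (le_max_right _ _) (by linarith)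
  have hint : ∫ ξ in U.1..U.1 + min σ 0, √(-deriv T ξ)
      ≤ ∫ ξ in U.1..U.1 + min σ' 0, √(-deriv T ξ) := by
    have hlo : 0 < U.1 + min σ 0 := by rcases min_cases σ 0 with h | h <;> linarith
    have hmin : min σ 0 ≤ min σ' 0 := min_le_min hσσ' le_rfl
    rw [intervalIntegral.integral_symm (U.1 + min σ 0),
      intervalIntegral.integral_symm (U.1 + min σ' 0), neg_le_neg_iff]
    refine intervalIntegral.integral_mono_interval (by linarith) (by linarith [min_le_right σ' 0])
      le_rfl (Eventually.of_forall fun ξ => Real.sqrt_nonneg _)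
      (intervalIntegrable_sqrt_neg_deriv (hT.mono fun ξ hξ => ?_))
    rw [uIcc_of_le (by linarith [min_le_right σ 0])] at hξ
    exact hlo.trans_le hξ.1
  linarith [Real.sqrt_le_sqrt hshock]

lemma continuousOn_Phi1_snd (hTa : AntitoneOn T (Ioi 0)) (hTc : ContinuousOn T (Ioi 0))
    {U : ℝ × ℝ} {R : ℝ} (hR : 0 ≤ R) (hRU : R < U.1) :
    ContinuousOn (fun σ => (Phi1 T σ U).2) (Icc (-R) R) := by
  simp only [Phi1_snd_eq]
  have hIcc : uIcc (U.1 - R) U.1 = Icc (U.1 - R) U.1 := uIcc_of_le (by linarith)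
  have hprim := intervalIntegral.continuousOn_primitive_interval'
    (intervalIntegrable_sqrt_neg_deriv (hTa.mono fun ξ hξ => by
      rw [hIcc] at hξ; exact lt_of_lt_of_le (by linarith) hξ.1)) (right_mem_uIcc (a := U.1 - R))
  refine ContinuousOn.sub (ContinuousOn.sub continuousOn_const ?_) ?_
  · refine Real.continuous_sqrt.comp_continuousOn (ContinuousOn.mul ?_ (by fun_prop))
    refine continuousOn_const.sub (hTc.comp (by fun_prop) fun σ _ => ?_)
    simp only [mem_Ioi]
    linarith [le_max_right σ 0]
  · refine hprim.comp (by fun_prop) fun σ hσ => ?_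
    rw [hIcc]
    constructor <;> cases min_cases σ 0 <;> linarith [hσ.1]

end WaveCurves

/-- The squared velocity jump `(u_ℓ - u_r)²` across the 2-shock from pressure `q` down to `r`. -/
def shockJumpSq (T : ℝ → ℝ) (q r : ℝ) : ℝ := (T r - T q) * (q - r)

section Shocks

variable {T : ℝ → ℝ}

lemma eq_Phi2_iff {σ : ℝ} (hσ : σ < 0) (U V : ℝ × ℝ) :
    V = Phi2 T σ U ↔ σ = V.1 - U.1 ∧ V.2 = U.2 - √(shockJumpSq T U.1 V.1) := by
  obtain ⟨r, v⟩ := V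
  simp only [Phi2, if_pos hσ, Prod.ext_iff, shockJumpSq]
  constructor
  · rintro ⟨rfl, rfl⟩
    exact ⟨by ring, by ring_nf⟩
  · rintro ⟨rfl, rfl⟩
    exact ⟨by ring, by ring_nf⟩

variable {a b κ m : ℝ} {L : ℝ≥0}

lemma mul_sub_le_shockJumpSq_sub (hT : AntitoneOn T (Ioi 0)) (hgap : m ≤ T b - T κ)
    (hbκ : b ≤ κ) {r q q' : ℝ} (hr : 0 < r) (hrb : r ≤ b) (hq : κ ≤ q) (hqq' : q ≤ q') :
    m * (q' - q) ≤ shockJumpSq T q' r - shockJumpSq T q r := by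
  have h1 := hT hr (show b ∈ Ioi 0 from hr.trans_le hrb) hrb
  have h2 := hT (show κ ∈ Ioi 0 by simp only [mem_Ioi]; linarith)
    (show q' ∈ Ioi 0 by simp only [mem_Ioi]; linarith) (hq.trans hqq')
  have h3 := hT (show q ∈ Ioi 0 by simp only [mem_Ioi]; linarith)
    (show q' ∈ Ioi 0 by simp only [mem_Ioi]; linarith) hqq'
  have e : shockJumpSq T q' r - shockJumpSq T q r
      = (T r - T q') * (q' - q) + (T q - T q') * (q - r) := by
    unfold shockJumpSq; ring
  rw [e]
  nlinarith [mul_nonneg (sub_nonneg.2 h3) (by linarith : 0 ≤ q - r)]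

lemma mul_le_shockJumpSq (hT : AntitoneOn T (Ioi 0)) (hgap : m ≤ T b - T κ) (hm : 0 ≤ m)
    (hbκ : b ≤ κ) {r q : ℝ} (hr : 0 < r) (hrb : r ≤ b) (hq : κ ≤ q) :
    m * (κ - b) ≤ shockJumpSq T q r := by
  have h1 := hT hr (show b ∈ Ioi 0 from hr.trans_le hrb) hrb
  have h2 := hT (show κ ∈ Ioi 0 by simp only [mem_Ioi]; linarith)
    (show q ∈ Ioi 0 by simp only [mem_Ioi]; linarith) hq
  exact mul_le_mul (by linarith) (by linarith) (by linarith) (by linarith)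

lemma shockJumpSq_le (hL : LipschitzOnWith L T (Ici a)) {r q : ℝ} (hr : a ≤ r) (hrq : r ≤ q) :
    shockJumpSq T q r ≤ L * (q - r) ^ 2 := by
  have h := (le_abs_self _).trans (hL.dist_le_mul r hr q (hr.trans hrq))
  rw [Real.dist_eq, abs_sub_comm, abs_of_nonneg (by linarith)] at h
  unfold shockJumpSq
  nlinarith [mul_le_mul_of_nonneg_right h (by linarith : 0 ≤ q - r)]

lemma abs_shockJumpSq_sub_le (hL : LipschitzOnWith L T (Ici a)) {q r q' r' D : ℝ}
    (hq : a ≤ q) (hr : a ≤ r) (hq' : a ≤ q') (hr' : a ≤ r') (hD : |q - r| ≤ D)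
    (hD' : |q' - r'| ≤ D) :
    |shockJumpSq T q r - shockJumpSq T q' r'| ≤ 2 * L * D * (|q - q'| + |r - r'|) := by
  have lip : ∀ x ∈ Ici a, ∀ y ∈ Ici a, |T x - T y| ≤ L * |x - y| := fun x hx y hy => by
    simpa [Real.dist_eq] using hL.dist_le_mul x hx y hy
  have e : shockJumpSq T q r - shockJumpSq T q' r'
      = ((T r - T r') - (T q - T q')) * (q - r) + (T r' - T q') * ((q - q') - (r - r')) := by
    unfold shockJumpSq; ring
  have hX : |(T r - T r') - (T q - T q')| ≤ L * (|q - q'| + |r - r'|) := by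
    have := abs_sub (T r - T r') (T q - T q')
    nlinarith [lip r hr r' hr', lip q hq q' hq']
  have hY : |T r' - T q'| ≤ L * D := by
    have := lip r' hr' q' hq'
    rw [abs_sub_comm r'] at this
    nlinarith [L.coe_nonneg]
  have hB : |(q - q') - (r - r')| ≤ |q - q'| + |r - r'| := abs_sub _ _
  rw [e]
  calc _ ≤ |(T r - T r') - (T q - T q')| * |q - r| + |T r' - T q'| * |(q - q') - (r - r')| := by
        rw [← abs_mul, ← abs_mul]; exact abs_add_le _ _
    _ ≤ L * (|q - q'| + |r - r'|) * D + L * D * (|q - q'| + |r - r'|) := by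
        gcongr
        exact mul_nonneg L.coe_nonneg ((abs_nonneg _).trans hD)
    _ = 2 * L * D * (|q - q'| + |r - r'|) := by ring

end Shocks

/-- The velocity reached from `U` along the 1-wave curve, minus the one from which a 2-shock
leads down to pressure `r`; the Riemann problem is solved where it equals the right velocity. -/
noncomputable def velocityMismatch (T : ℝ → ℝ) (U : ℝ × ℝ) (r σ : ℝ) : ℝ :=
  (Phi1 T σ U).2 - √(shockJumpSq T (U.1 + σ) r)

section Mismatch

variable {T : ℝ → ℝ} {κ a b c m : ℝ} {L : ℝ≥0} {U : ℝ × ℝ} {r : ℝ}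

lemma eq_Phi2_Phi1_iff {σ : ℝ × ℝ} (hσ : σ.2 < 0) (V : ℝ × ℝ) :
    V = Phi2 T σ.2 (Phi1 T σ.1 U) ↔
      σ.2 = V.1 - (U.1 + σ.1) ∧ velocityMismatch T U V.1 σ.1 = V.2 := by
  rw [eq_Phi2_iff hσ, eq_comm (a := V.2)]
  simp [velocityMismatch]

lemma mul_sub_le_velocityMismatch_sub (hTa : AntitoneOn T (Ioi 0))
    (hL : LipschitzOnWith L T (Ici a)) (hgap : m ≤ T b - T κ) (hm : 0 ≤ m) (ha : 0 < a)
    (hbκ : b ≤ κ) (hr : r ∈ Icc a b) (hU : 0 < U.1) {σ σ' : ℝ} (hσ : κ ≤ U.1 + σ) (hσσ' : σ ≤ σ')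
    (hσ' : U.1 + σ' ≤ c) :
    m / (2 * √(L * (c - a) ^ 2)) * (σ' - σ) ≤
      velocityMismatch T U r σ - velocityMismatch T U r σ' := by
  have hr0 : 0 < r := ha.trans_le hr.1
  have hA := antitoneOn_Phi1_snd hTa hU
    (show σ ∈ Ioi (-U.1) by simp only [mem_Ioi]; linarith [hr.2])
    (show σ' ∈ Ioi (-U.1) by simp only [mem_Ioi]; linarith [hr.2]) hσσ'
  have hG := mul_sub_le_shockJumpSq_sub hTa hgap hbκ hr0 hr.2 hσ (by linarith : U.1 + σ ≤ U.1 + σ')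
  have hGup : shockJumpSq T (U.1 + σ') r ≤ L * (c - a) ^ 2 := by
    refine (shockJumpSq_le hL hr.1 (by linarith [hr.2])).trans ?_
    gcongr <;> linarith [hr.1, hr.2]
  have hsq := sub_div_le_sqrt_sub_sqrt
    ((mul_nonneg hm (sub_nonneg.2 hbκ)).trans (mul_le_shockJumpSq hTa hgap hm hbκ hr0 hr.2 hσ))
    (by nlinarith) hGup
  calc m / (2 * √(L * (c - a) ^ 2)) * (σ' - σ)
      = m * (U.1 + σ' - (U.1 + σ)) / (2 * √(L * (c - a) ^ 2)) := by ring
    _ ≤ (shockJumpSq T (U.1 + σ') r - shockJumpSq T (U.1 + σ) r) / (2 * √(L * (c - a) ^ 2)) := by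
        gcongr
    _ ≤ _ := by simp only [velocityMismatch] at hA ⊢; linarith

lemma continuousOn_velocityMismatch (hTa : AntitoneOn T (Ioi 0)) (hTc : ContinuousOn T (Ioi 0))
    {R : ℝ} (hR : 0 ≤ R) (hRU : R < U.1) :
    ContinuousOn (velocityMismatch T U r) (Icc (-R) R) := by
  refine (continuousOn_Phi1_snd hTa hTc hR hRU).sub (Real.continuous_sqrt.comp_continuousOn ?_)
  refine (continuousOn_const.sub (hTc.comp (by fun_prop) fun σ hσ => ?_)).mul (by fun_prop)
  simp only [mem_Ioi]
  linarith [hσ.1]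

theorem existsUnique_Phi2_Phi1 (hTa : AntitoneOn T (Ioi 0)) (hTc : ContinuousOn T (Ioi 0))
    (hL : LipschitzOnWith L T (Ici a)) (hgap : m ≤ T b - T κ) (hm : 0 < m) (ha : 0 < a)
    (hbκ : b < κ) {Ur : ℝ × ℝ} (hr : Ur.1 ∈ Icc a b) {R : ℝ} (hR : 0 ≤ R) (hpR : κ < U.1 - R)
    (hpc : U.1 + R ≤ c)
    (hv : |U.2 - √(shockJumpSq T U.1 Ur.1) - Ur.2| ≤ m / (2 * √(L * (c - a) ^ 2)) * R) :
    ∃! σ : ℝ × ℝ, |σ.1| ≤ R ∧ σ.2 < 0 ∧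
      Ur = Phi2 T σ.2 (Phi1 T σ.1 U) ∧ κ < (Phi1 T σ.1 U).1 := by
  have hκ : 0 < κ := by linarith [hr.1, hr.2]
  have hGmin : 0 < m * (κ - b) := mul_pos hm (sub_pos.2 hbκ)
  have hc₀ : 0 < m / (2 * √(L * (c - a) ^ 2)) := by
    have hG := (mul_le_shockJumpSq hTa hgap hm.le hbκ.le (ha.trans_le hr.1) hr.2
      (by linarith : κ ≤ U.1 + 0)).trans
      (shockJumpSq_le hL hr.1 (by linarith [hr.2] : Ur.1 ≤ U.1 + 0))
    have : (0 : ℝ) < L * (c - a) ^ 2 :=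
      hGmin.trans_le (hG.trans (by gcongr <;> linarith [hr.1, hr.2]))
    positivity
  obtain ⟨σ₁, ⟨hσ₁, hσ₁v⟩, huniq⟩ := existsUnique_mem_Icc_eq hc₀
    (continuousOn_velocityMismatch (U := U) hTa hTc hR (by linarith))
    (fun σ hσ σ' hσ' hσσ' => mul_sub_le_velocityMismatch_sub hTa hL hgap hm.le ha hbκ.le hr
      (by linarith [hr.2]) (by linarith [hσ.1]) hσσ' (by linarith [hσ'.2]))
    (by simpa [velocityMismatch, Phi1] using hv)
  have hκσ₁ : κ < U.1 + σ₁ := by linarith [hσ₁.1]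
  have hneg : Ur.1 - (U.1 + σ₁) < 0 := by linarith [hr.2]
  refine ⟨(σ₁, Ur.1 - (U.1 + σ₁)), ⟨abs_le.2 hσ₁, hneg,
    (eq_Phi2_Phi1_iff hneg Ur).2 ⟨rfl, hσ₁v⟩, by simpa using hκσ₁⟩, ?_⟩
  rintro ⟨s₁, s₂⟩ ⟨hs₁, hs₂, heq, -⟩
  obtain ⟨hs₂', hs₁v⟩ := (eq_Phi2_Phi1_iff hs₂ Ur).1 heq
  obtain rfl := huniq s₁ ⟨abs_le.1 hs₁, hs₁v⟩
  exact Prod.ext rfl hs₂'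

end Mismatch

theorem exists_uniform_existsUnique_Phi2_Phi1 {κ p₁ p₂ η m : ℝ} {L : ℝ≥0} (hL : 0 < L)
    (hm : 0 < m) (hη : 0 < η) (hp₂ : 2 * η < p₂) (hκ : p₂ + 2 * η < κ) (hp₁ : κ < p₁) :
    ∃ δ C : ℝ, 0 < δ ∧ 0 < C ∧ ∀ T : ℝ → ℝ, AntitoneOn T (Ioi 0) → ContinuousOn T (Ioi 0) →
      LipschitzOnWith L T (Ici (p₂ - 2 * η)) → m ≤ T (p₂ + 2 * η) - T κ →
      ∀ r₀ u₀ : ℝ, |r₀ - p₂| < η → ∀ Ul Ur : ℝ × ℝ,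
        |Ul.1 - p₁| < δ → |Ul.2 - u₀| < δ → |Ur.1 - r₀| < δ →
        |Ur.2 - (u₀ - √(shockJumpSq T p₁ r₀))| < δ →
        ∃! σ : ℝ × ℝ, |σ.1| ≤ C * δ ∧ σ.2 < 0 ∧
          Ur = Phi2 T σ.2 (Phi1 T σ.1 Ul) ∧ κ < (Phi1 T σ.1 Ul).1 := by
  -- Free pressures stay in `[p₂ - 2η, p₂ + 2η]` and congested ones in `[κ, 2p₁ - κ]`. There the
  -- mismatch decreases at rate `c₀`, and `K δ` bounds the change of `√(shockJumpSq T q r)` when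
  -- `q` and `r` both move by less than `δ`.
  have hD : 0 < 2 * p₁ - κ - (p₂ - 2 * η) := by linarith
  have hgmin : 0 < m * (κ - (p₂ + 2 * η)) := mul_pos hm (by linarith)
  set c₀ := m / (2 * √(L * (2 * p₁ - κ - (p₂ - 2 * η)) ^ 2))
  set K := 2 * L * (2 * p₁ - κ - (p₂ - 2 * η)) / √(m * (κ - (p₂ + 2 * η)))
  have hc₀ : 0 < c₀ := by positivity
  set C := (2 + K) / c₀
  have hC : 0 < C := by positivity
  set δ := min η ((p₁ - κ) / (2 * (C + 1)))
  have hδ : 0 < δ := lt_min hη (by apply div_pos <;> linarith)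
  have hδη : δ ≤ η := min_le_left _ _
  have hδC : (C + 1) * δ < p₁ - κ := by
    have h := mul_le_mul_of_nonneg_left (min_le_right η ((p₁ - κ) / (2 * (C + 1))))
      (by linarith : 0 ≤ C + 1)
    have e : (C + 1) * ((p₁ - κ) / (2 * (C + 1))) = (p₁ - κ) / 2 := by field_simp
    linarith
  refine ⟨δ, C, hδ, hC, fun T hTa hTc hTL hgap r₀ u₀ hr₀ Ul Ur h₁ h₂ h₃ h₄ => ?_⟩
  have hCδ : 0 ≤ C * δ := by positivity
  have h₁' := abs_lt.1 h₁
  have h₃' := abs_lt.1 h₃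
  rw [abs_lt] at hr₀ h₂ h₄
  have hG := abs_shockJumpSq_sub_le hTL (T := T) (q := p₁) (r := r₀) (q' := Ul.1) (r' := Ur.1)
    (D := 2 * p₁ - κ - (p₂ - 2 * η))
    (by linarith) (by linarith) (by linarith) (by linarith)
    (by rw [abs_le]; constructor <;> linarith) (by rw [abs_le]; constructor <;> linarith)
  have hsq := abs_sqrt_sub_sqrt_le hgmin
    (mul_le_shockJumpSq hTa hgap hm.le (r := r₀) (by linarith) (by linarith) (by linarith) hp₁.le)
    (mul_le_shockJumpSq hTa hgap hm.le (r := Ur.1) (q := Ul.1) (by linarith) (by linarith)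
      (by linarith) (by linarith))
  have hsqK : |√(shockJumpSq T p₁ r₀) - √(shockJumpSq T Ul.1 Ur.1)| ≤ K * δ := by
    refine hsq.trans ?_
    rw [div_le_iff₀ (by positivity)]
    have : |p₁ - Ul.1| + |r₀ - Ur.1| ≤ 2 * δ := by
      rw [abs_sub_comm p₁, abs_sub_comm r₀]; linarith
    calc _ ≤ 2 * L * (2 * p₁ - κ - (p₂ - 2 * η)) * (2 * δ) := hG.trans (by gcongr)
      _ = K * δ * (2 * √(m * (κ - (p₂ + 2 * η)))) := by
        simp only [K]; field_simp
  refine existsUnique_Phi2_Phi1 hTa hTc hTL hgap hm (by linarith) (by linarith)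
    ⟨by linarith, by linarith⟩ (by positivity) (by linarith) (c := 2 * p₁ - κ) (by linarith) ?_
  have hc₀C : c₀ * (C * δ) = (2 + K) * δ := by
    simp only [C]; field_simp [hc₀.ne']
  rw [hc₀C, abs_le]
  constructor <;> linarith [abs_le.1 hsqK]

theorem stmt13_general (κ γi γc p01 p02 u01 : ℝ)
    (hκ : 0 < κ) (hγi : 1 < γi) (hγc : 1 < γc)
    (hp02 : 0 < p02) (h1 : p02 < κ) (h2 : κ < p01)
    (T : ℝ → ℝ → ℝ)
    (hT : ∀ ε > (0:ℝ), ∀ p > (0:ℝ), 1 < T ε p ∧ Pe κ γi γc ε (T ε p) = p)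
    (p02e u02e : ℝ → ℝ)
    (hp02conv : Tendsto p02e (nhdsWithin 0 (Ioi 0)) (nhds p02))
    (hu02e : ∀ ε > (0:ℝ),
      u02e ε = u01 - Real.sqrt ((T ε (p02e ε) - T ε p01) * (p01 - p02e ε))) :
    ∃ δ εb C : ℝ, 0 < δ ∧ 0 < εb ∧ 0 < C ∧
      ∀ ε, 0 < ε → ε < εb →
        ∀ Ul Ur : ℝ × ℝ,
          |Ul.1 - p01| < δ → |Ul.2 - u01| < δ →
          |Ur.1 - p02e ε| < δ → |Ur.2 - u02e ε| < δ →
          ∃! σ : ℝ × ℝ, |σ.1| ≤ C * δ ∧ σ.2 < 0 ∧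
            Ur = Phi2 (T ε) σ.2 (Phi1 (T ε) σ.1 Ul) ∧
            κ < (Phi1 (T ε) σ.1 Ul).1 := by
  obtain ⟨η, hη, hηp, hηκ⟩ : ∃ η : ℝ, 0 < η ∧ 2 * η < p02 ∧ p02 + 2 * η < κ :=
    ⟨min p02 (κ - p02) / 4, by positivity, by linarith [min_le_left p02 (κ - p02)],
      by linarith [min_le_right p02 (κ - p02)]⟩
  obtain ⟨L, hL, hLip⟩ := exists_lipschitzOnWith_of_Pe_inverse (γi := γi) (γc := γc)
    (a := p02 - 2 * η) hκ (by linarith) (by linarith) (by linarith)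
  obtain ⟨m, hm, hgap⟩ := exists_le_sub_of_Pe_inverse (γi := γi) (γc := γc) (b := p02 + 2 * η)
    hκ (by linarith) (by linarith) (by linarith) hηκ
  obtain ⟨δ, C, hδ, hC, hsol⟩ := exists_uniform_existsUnique_Phi2_Phi1 hL hm hη hηp hηκ h2
  obtain ⟨εb, hεb, hsub⟩ := mem_nhdsGT_iff_exists_Ioo_subset.1 <| hgap.and <|
    ((eventually_lt_nhds one_pos).filter_mono nhdsWithin_le_nhds).and
      (hp02conv (Metric.ball_mem_nhds p02 hη))
  refine ⟨δ, εb, C, hδ, hεb, hC, fun ε hε hεb Ul Ur h₁ h₂ h₃ h₄ => ?_⟩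
  obtain ⟨hgapε, hε1, hr₀⟩ := hsub ⟨hε, hεb⟩
  have hP := Pe_strictAntiOn (γi := γi) (γc := γc) hκ (by linarith) (by linarith) hε.le
  rw [hu02e ε hε] at h₄
  exact hsol (T ε) (strictAntiOn_of_inverse hP (hT ε hε)).antitoneOn
    (continuousOn_of_inverse hP (fun τ hτ => Pe_pos hκ hε.le hτ) (hT ε hε))
    (hLip ε hε hε1.le (T ε) (hT ε hε)) (hgapε _ (hT ε hε)) _ _ hr₀ Ul Ur h₁ h₂ h₃ h₄

/-- Unique solvability of the Riemann problem across the congested/free interface: for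
states `U^ℓ` `δ`-close to the congested reference state `(p₀₁,u₀₁)` and `U^r` `δ`-close to
the free reference state `(p₀₂^ε,u₀₂^ε)`, there is a unique pair of wave strengths
`(σ₁,σ₂)` with `|σ₁| ≤ Cδ`, `σ₂ < 0`, such that `U^r = Φ₂^ε(σ₂)(Φ₁^ε(σ₁)(U^ℓ))` and the
intermediate state is congested (pressure `> κ`). -/
theorem stmt13 (κ γi γc p01 p02 u01 u02 : ℝ)
    (hκ : 0 < κ) (hγi : 1 < γi) (hγc : 1 < γc)
    (hp02 : 0 < p02) (h1 : p02 < κ) (h2 : κ < p01) (hu : u02 < u01)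
    (hRH : (p01 - p02) * ((κ / p02) ^ (1 / γi) - 1) = (u01 - u02) ^ 2)
    (T : ℝ → ℝ → ℝ)
    (hT : ∀ ε > (0:ℝ), ∀ p > (0:ℝ), 1 < T ε p ∧ Pe κ γi γc ε (T ε p) = p)
    (p02e u02e : ℝ → ℝ)
    (hp02e : ∀ ε > (0:ℝ), 0 < p02e ε ∧ p02e ε < κ)
    (hp02conv : Tendsto p02e (nhdsWithin 0 (Ioi 0)) (nhds p02))
    (hu02e : ∀ ε > (0:ℝ),
      u02e ε = u01 - Real.sqrt ((T ε (p02e ε) - T ε p01) * (p01 - p02e ε))) :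
    ∃ δ εb C : ℝ, 0 < δ ∧ 0 < εb ∧ 0 < C ∧
      ∀ ε, 0 < ε → ε < εb →
        ∀ Ul Ur : ℝ × ℝ,
          |Ul.1 - p01| < δ → |Ul.2 - u01| < δ →
          |Ur.1 - p02e ε| < δ → |Ur.2 - u02e ε| < δ →
          ∃! σ : ℝ × ℝ, |σ.1| ≤ C * δ ∧ σ.2 < 0 ∧
            Ur = Phi2 (T ε) σ.2 (Phi1 (T ε) σ.1 Ul) ∧
            κ < (Phi1 (T ε) σ.1 Ul).1 :=
  stmt13_general κ γi γc p01 p02 u01 hκ hγi hγc hp02 h1 h2 T hT p02e u02e hp02conv hu02e
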